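/- arXiv:1508.03209 — 4 statements merged into one kernel-verified Lean document; each statement's English description precedes it below -/
import Mathlib

section
/- Let R > 0 and m₁ = m₂ = m > 0. If z₁ = α and z₂ = λα are nonzero real numbers with α ≠ λα and R² + λα² ≠ 0, and they satisfy the two-body relative-equilibrium system 32R⁶(|z_k|²−R²)z_k/(R²+|z_k|²)⁴ = m(|z_j|²+R²)²(R²+z̄_j z_k)(z_j−z_k)/(|z_j−z_k|³|R²+z̄_j z_k|³) for {k,j}={1,2}, then λ satisfies (R²−α²)(R²+λ²α²)² + λ(R²−λ²α²)(R²+α²)² = 0. -/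
open Complex

/-!
The two sides of the equation for body `k` are the curvature force on `z_k` and the conformal
factor `(R² + z_j²)²` times the attraction of `z_j` on `z_k`. Divide each equation by its
conformal factor and add: the two attractions are opposite and cancel, leaving a polynomial
identity in `α` and `λα`. Clearing `32R⁶` and the factor `α` gives the claimed relation.
-/

noncomputable def curvatureForce (R x : ℝ) : ℝ :=
  32 * R ^ 6 * (x ^ 2 - R ^ 2) * x / (R ^ 2 + x ^ 2) ^ 4

noncomputable def pairForce (R m a b : ℝ) : ℝ :=
  m * (R ^ 2 + a * b) * (b - a) / (|b - a| ^ 3 * |R ^ 2 + a * b| ^ 3)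

theorem pairForce_swap (R m a b : ℝ) : pairForce R m b a = -pairForce R m a b := by
  rw [pairForce, pairForce, abs_sub_comm b a, mul_comm b a]
  ring

theorem curvatureForce_eq_of_complex {R m a b : ℝ}
    (h : (32 * (R : ℂ) ^ 6 * ((‖(a : ℂ)‖ ^ 2 - R ^ 2 : ℝ) : ℂ) * (a : ℂ)) /
          (((R ^ 2 + ‖(a : ℂ)‖ ^ 2 : ℝ) : ℂ)) ^ 4 =
        (m : ℂ) * ((‖(b : ℂ)‖ ^ 2 + R ^ 2 : ℝ) : ℂ) ^ 2 *
            ((R : ℂ) ^ 2 + (starRingEnd ℂ) (b : ℂ) * (a : ℂ)) * ((b : ℂ) - (a : ℂ)) /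
          (((‖(b : ℂ) - (a : ℂ)‖ ^ 3 *
              ‖(R : ℂ) ^ 2 + (starRingEnd ℂ) (b : ℂ) * (a : ℂ)‖ ^ 3 : ℝ) : ℂ))) :
    curvatureForce R a = (R ^ 2 + b ^ 2) ^ 2 * pairForce R m a b := by
  simp only [conj_ofReal, ← ofReal_pow, ← ofReal_mul, ← ofReal_sub, ← ofReal_add,
    ← ofReal_ofNat, norm_real, Real.norm_eq_abs, sq_abs, ← ofReal_div, ofReal_inj] at h
  rw [curvatureForce, pairForce, h, mul_comm b a]
  ring

theorem balance_of_curvatureForce_eq {R a b F : ℝ} (hR : R ≠ 0)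
    (ha : curvatureForce R a = (R ^ 2 + b ^ 2) ^ 2 * F)
    (hb : curvatureForce R b = -((R ^ 2 + a ^ 2) ^ 2 * F)) :
    (a ^ 2 - R ^ 2) * a * (R ^ 2 + b ^ 2) ^ 2 + (b ^ 2 - R ^ 2) * b * (R ^ 2 + a ^ 2) ^ 2 = 0 := by
  have hA : R ^ 2 + a ^ 2 ≠ 0 := by positivity
  have hB : R ^ 2 + b ^ 2 ≠ 0 := by positivity
  have hsum :
      curvatureForce R a / (R ^ 2 + b ^ 2) ^ 2 + curvatureForce R b / (R ^ 2 + a ^ 2) ^ 2 = 0 := by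
    rw [ha, hb]
    field_simp
    ring
  unfold curvatureForce at hsum
  field_simp at hsum
  rw [mul_zero] at hsum
  have h32 : (32 * R ^ 6 : ℝ) ≠ 0 := by positivity
  linear_combination (mul_eq_zero.1 hsum).resolve_left h32

theorem two_body_equal_mass_condition_general (R m α lam : ℝ) (hR : 0 < R)
    (hα : α ≠ 0)
    (h1 :
      (32 * (R : ℂ) ^ 6 * ((‖((α : ℂ))‖ ^ 2 - R ^ 2 : ℝ) : ℂ) * (α : ℂ)) /
          (((R ^ 2 + ‖((α : ℂ))‖ ^ 2 : ℝ) : ℂ)) ^ 4 =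
        (m : ℂ) * ((‖((lam * α : ℝ) : ℂ)‖ ^ 2 + R ^ 2 : ℝ) : ℂ) ^ 2 *
            ((R : ℂ) ^ 2 + (starRingEnd ℂ) ((lam * α : ℝ) : ℂ) * (α : ℂ)) *
            (((lam * α : ℝ) : ℂ) - (α : ℂ)) /
          (((‖(((lam * α : ℝ) : ℂ) - (α : ℂ))‖ ^ 3 *
              ‖((R : ℂ) ^ 2 + (starRingEnd ℂ) ((lam * α : ℝ) : ℂ) * (α : ℂ))‖ ^ 3 :
              ℝ) : ℂ)))
    (h2 :
      (32 * (R : ℂ) ^ 6 * ((‖(((lam * α : ℝ) : ℂ))‖ ^ 2 - R ^ 2 : ℝ) : ℂ) *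
            ((lam * α : ℝ) : ℂ)) /
          (((R ^ 2 + ‖(((lam * α : ℝ) : ℂ))‖ ^ 2 : ℝ) : ℂ)) ^ 4 =
        (m : ℂ) * ((‖((α : ℂ))‖ ^ 2 + R ^ 2 : ℝ) : ℂ) ^ 2 *
            ((R : ℂ) ^ 2 + (starRingEnd ℂ) ((α : ℂ)) * ((lam * α : ℝ) : ℂ)) *
            ((α : ℂ) - ((lam * α : ℝ) : ℂ)) /
          (((‖((α : ℂ) - ((lam * α : ℝ) : ℂ))‖ ^ 3 *
              ‖((R : ℂ) ^ 2 + (starRingEnd ℂ) ((α : ℂ)) * ((lam * α : ℝ) : ℂ))‖ ^ 3 :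
              ℝ) : ℂ))) :
    (R ^ 2 - α ^ 2) * (R ^ 2 + lam ^ 2 * α ^ 2) ^ 2 +
      lam * (R ^ 2 - lam ^ 2 * α ^ 2) * (R ^ 2 + α ^ 2) ^ 2 = 0 := by
  have h₁ := curvatureForce_eq_of_complex h1
  have h₂ := curvatureForce_eq_of_complex h2
  rw [pairForce_swap, mul_neg] at h₂
  have hbal := balance_of_curvatureForce_eq hR.ne' h₁ h₂
  apply mul_left_cancel₀ hα
  linear_combination -hbal

theorem two_body_equal_mass_condition (R m α lam : ℝ) (hR : 0 < R) (hm : 0 < m)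
    (hα : α ≠ 0) (hz : lam * α ≠ 0) (hne : α ≠ lam * α) (hconj : R ^ 2 + lam * α ^ 2 ≠ 0)
    (h1 :
      (32 * (R : ℂ) ^ 6 * ((‖((α : ℂ))‖ ^ 2 - R ^ 2 : ℝ) : ℂ) * (α : ℂ)) /
          (((R ^ 2 + ‖((α : ℂ))‖ ^ 2 : ℝ) : ℂ)) ^ 4 =
        (m : ℂ) * ((‖((lam * α : ℝ) : ℂ)‖ ^ 2 + R ^ 2 : ℝ) : ℂ) ^ 2 *
            ((R : ℂ) ^ 2 + (starRingEnd ℂ) ((lam * α : ℝ) : ℂ) * (α : ℂ)) *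
            (((lam * α : ℝ) : ℂ) - (α : ℂ)) /
          (((‖(((lam * α : ℝ) : ℂ) - (α : ℂ))‖ ^ 3 *
              ‖((R : ℂ) ^ 2 + (starRingEnd ℂ) ((lam * α : ℝ) : ℂ) * (α : ℂ))‖ ^ 3 :
              ℝ) : ℂ)))
    (h2 :
      (32 * (R : ℂ) ^ 6 * ((‖(((lam * α : ℝ) : ℂ))‖ ^ 2 - R ^ 2 : ℝ) : ℂ) *
            ((lam * α : ℝ) : ℂ)) /
          (((R ^ 2 + ‖(((lam * α : ℝ) : ℂ))‖ ^ 2 : ℝ) : ℂ)) ^ 4 =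
        (m : ℂ) * ((‖((α : ℂ))‖ ^ 2 + R ^ 2 : ℝ) : ℂ) ^ 2 *
            ((R : ℂ) ^ 2 + (starRingEnd ℂ) ((α : ℂ)) * ((lam * α : ℝ) : ℂ)) *
            ((α : ℂ) - ((lam * α : ℝ) : ℂ)) /
          (((‖((α : ℂ) - ((lam * α : ℝ) : ℂ))‖ ^ 3 *
              ‖((R : ℂ) ^ 2 + (starRingEnd ℂ) ((α : ℂ)) * ((lam * α : ℝ) : ℂ))‖ ^ 3 :
              ℝ) : ℂ))) :
    (R ^ 2 - α ^ 2) * (R ^ 2 + lam ^ 2 * α ^ 2) ^ 2 +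
      lam * (R ^ 2 - lam ^ 2 * α ^ 2) * (R ^ 2 + α ^ 2) ^ 2 = 0 :=
  two_body_equal_mass_condition_general R m α lam hR hα h1 h2
end

section
/- For any real R > 0 and real α with 0 < α < R, the four real numbers λ₁ = −1, λ₂ = R²/α², λ₃ = R(α−R)/(α(α+R)), λ₄ = −R(R+α)/(α(α−R)) are exactly the roots of the quartic polynomial in λ: (R²−α²)(R²+λ²α²)² + λ(R²−λ²α²)(R²+α²)² = 0. -/
theorem quartic_roots_two_body (R α : ℝ) (hR : 0 < R) (hα : 0 < α) (hαR : α < R) :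
    ∀ lam : ℝ,
      (R ^ 2 - α ^ 2) * (R ^ 2 + lam ^ 2 * α ^ 2) ^ 2 +
          lam * (R ^ 2 - lam ^ 2 * α ^ 2) * (R ^ 2 + α ^ 2) ^ 2 = 0 ↔
        lam = -1 ∨ lam = R ^ 2 / α ^ 2 ∨ lam = R * (α - R) / (α * (α + R)) ∨
          lam = -(R * (R + α) / (α * (α - R))) := by
  intro lam
  have hα0 : α ≠ 0 := ne_of_gt hα
  have h1 : α + R ≠ 0 := by positivity
  have h2 : α - R ≠ 0 := ne_of_lt (by linarith)
  have hc : α ^ 4 * (R ^ 2 - α ^ 2) ≠ 0 :=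
    mul_ne_zero (by positivity) (ne_of_gt (by nlinarith))
  have key : (R ^ 2 - α ^ 2) * (R ^ 2 + lam ^ 2 * α ^ 2) ^ 2 +
      lam * (R ^ 2 - lam ^ 2 * α ^ 2) * (R ^ 2 + α ^ 2) ^ 2 =
      (α ^ 4 * (R ^ 2 - α ^ 2)) * ((lam - (-1)) * ((lam - R ^ 2 / α ^ 2) *
        ((lam - R * (α - R) / (α * (α + R))) *
          (lam - (-(R * (R + α) / (α * (α - R)))))))) := by
    field_simp
    ring
  rw [key, mul_eq_zero, mul_eq_zero, mul_eq_zero, mul_eq_zero]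
  simp [hα0, (show R ^ 2 ≠ α ^ 2 by nlinarith), sub_eq_zero, add_eq_zero_iff_eq_neg]
end

section
/- Let R > 0 and m > 0 with m < 2R³. Then the equation (R²−α²)α/(R²+α²)² = ∛m/(4·∛2·R²) has exactly two solutions α in the open interval (0,R), one in (0,(√2−1)R) and one in ((√2−1)R, R). -/
/-!
The left-hand side `f α = (R² - α²) α / (R² + α²)²` vanishes at `0` and at `R`, and its derivative
has numerator `R⁴ - 6 R² α² + α⁴ = (α² - a²)(α² - b²)` with `a = (√2 - 1) R`, `b = (√2 + 1) R > R`.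
So on `[0, R]` the function increases strictly up to its maximum `f a = 1 / (4 R)` and then decreases
strictly back to `0`. The hypothesis `m < 2 R³` places the right-hand side strictly between `0` and
`1 / (4 R)`, hence it is attained exactly once on each side of `a`.
-/

open Set

namespace MobiusElliptic

noncomputable def profile (R α : ℝ) : ℝ := (R ^ 2 - α ^ 2) * α / (R ^ 2 + α ^ 2) ^ 2

lemma hasDerivAt_profile {R : ℝ} (hR : R ≠ 0) (x : ℝ) :
    HasDerivAt (profile R) ((R ^ 4 - 6 * R ^ 2 * x ^ 2 + x ^ 4) / (R ^ 2 + x ^ 2) ^ 3) x := by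
  have hden : R ^ 2 + x ^ 2 ≠ 0 := by positivity
  have hnum : HasDerivAt (fun α : ℝ => (R ^ 2 - α ^ 2) * α) (R ^ 2 - 3 * x ^ 2) x := by
    refine (((hasDerivAt_pow 2 x).const_sub (R ^ 2)).mul (hasDerivAt_id x)).congr_deriv ?_
    simp only [id_eq]
    ring
  have hdenom : HasDerivAt (fun α : ℝ => (R ^ 2 + α ^ 2) ^ 2) (4 * x * (R ^ 2 + x ^ 2)) x := by
    refine (((hasDerivAt_pow 2 x).const_add (R ^ 2)).pow 2).congr_deriv ?_
    push_cast
    ring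
  refine (hnum.div hdenom (pow_ne_zero 2 hden)).congr_deriv ?_
  field_simp
  ring

lemma continuous_profile {R : ℝ} (hR : R ≠ 0) : Continuous (profile R) :=
  continuous_iff_continuousAt.2 fun x => (hasDerivAt_profile hR x).continuousAt

lemma quartic_eq_mul (R x : ℝ) :
    R ^ 4 - 6 * R ^ 2 * x ^ 2 + x ^ 4 =
      (x ^ 2 - ((√2 - 1) * R) ^ 2) * (x ^ 2 - ((√2 + 1) * R) ^ 2) := by
  have h2 : √2 ^ 2 = 2 := Real.sq_sqrt zero_le_two
  linear_combination (2 * R ^ 2 * x ^ 2 - R ^ 4 * √2 ^ 2) * h2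

lemma sqrt_two_sub_one_mul_pos {R : ℝ} (hR : 0 < R) : 0 < (√2 - 1) * R :=
  mul_pos (sub_pos.2 Real.one_lt_sqrt_two) hR

lemma strictMonoOn_profile {R : ℝ} (hR : 0 < R) :
    StrictMonoOn (profile R) (Icc 0 ((√2 - 1) * R)) := by
  refine strictMonoOn_of_deriv_pos (convex_Icc _ _) (continuous_profile hR.ne').continuousOn ?_
  intro x hx
  rw [interior_Icc] at hx
  rw [(hasDerivAt_profile hR.ne' x).deriv, quartic_eq_mul]
  have ha : x ^ 2 < ((√2 - 1) * R) ^ 2 := pow_lt_pow_left₀ hx.2 hx.1.le two_ne_zero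
  have hab : ((√2 - 1) * R) ^ 2 < ((√2 + 1) * R) ^ 2 :=
    pow_lt_pow_left₀ (by linarith) (sqrt_two_sub_one_mul_pos hR).le two_ne_zero
  apply div_pos (mul_pos_of_neg_of_neg (by linarith) (by linarith))
  positivity

lemma strictAntiOn_profile {R : ℝ} (hR : 0 < R) :
    StrictAntiOn (profile R) (Icc ((√2 - 1) * R) R) := by
  refine strictAntiOn_of_deriv_neg (convex_Icc _ _) (continuous_profile hR.ne').continuousOn ?_
  intro x hx
  rw [interior_Icc] at hx
  rw [(hasDerivAt_profile hR.ne' x).deriv, quartic_eq_mul]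
  have ha0 := sqrt_two_sub_one_mul_pos hR
  have ha : ((√2 - 1) * R) ^ 2 < x ^ 2 := pow_lt_pow_left₀ hx.1 ha0.le two_ne_zero
  have hb : x ^ 2 < ((√2 + 1) * R) ^ 2 :=
    pow_lt_pow_left₀ (by nlinarith [hx.2, Real.one_lt_sqrt_two]) (ha0.trans hx.1).le two_ne_zero
  apply div_neg_of_neg_of_pos (mul_neg_of_pos_of_neg (by linarith) (by linarith))
  positivity

lemma profile_zero (R : ℝ) : profile R 0 = 0 := by simp [profile]

lemma profile_self (R : ℝ) : profile R R = 0 := by simp [profile]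

lemma profile_max {R : ℝ} (hR : 0 < R) : profile R ((√2 - 1) * R) = 1 / (4 * R) := by
  have h2 : √2 ^ 2 = 2 := Real.sq_sqrt zero_le_two
  have ha : R ^ 2 + ((√2 - 1) * R) ^ 2 ≠ 0 := by positivity
  rw [profile, div_eq_div_iff (pow_ne_zero 2 ha) (by positivity)]
  linear_combination (-(R ^ 4) * (√2 ^ 2 - 2)) * h2

lemma rhs_lt_profile_max {R m : ℝ} (hR : 0 < R) (hm : 0 < m) (hmass : m < 2 * R ^ 3) :
    m ^ ((1 : ℝ) / 3) / (4 * (2 : ℝ) ^ ((1 : ℝ) / 3) * R ^ 2) < 1 / (4 * R) := by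
  have hcbrt : (2 * R ^ 3) ^ ((1 : ℝ) / 3) = (2 : ℝ) ^ ((1 : ℝ) / 3) * R := by
    rw [Real.mul_rpow zero_le_two (by positivity), ← Real.rpow_natCast R 3,
      ← Real.rpow_mul hR.le]
    norm_num
  have hlt : m ^ ((1 : ℝ) / 3) < (2 : ℝ) ^ ((1 : ℝ) / 3) * R :=
    hcbrt ▸ Real.rpow_lt_rpow hm.le hmass (by norm_num)
  have h2 : 0 < (2 : ℝ) ^ ((1 : ℝ) / 3) := by positivity
  rw [div_lt_div_iff₀ (by positivity) (by positivity)]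
  nlinarith [mul_pos h2 hR]

end MobiusElliptic

lemma exists_two_eq_of_strictMonoOn_of_strictAntiOn {f : ℝ → ℝ} {p q r c : ℝ}
    (hpq : p ≤ q) (hqr : q ≤ r) (hf : ContinuousOn f (Icc p r))
    (hmono : StrictMonoOn f (Icc p q)) (hanti : StrictAntiOn f (Icc q r))
    (hcp : c ∈ Ioo (f p) (f q)) (hcr : c ∈ Ioo (f r) (f q)) :
    ∃ x₁ ∈ Ioo p q, ∃ x₂ ∈ Ioo q r, f x₁ = c ∧ f x₂ = c ∧
      ∀ x ∈ Ioo p r, f x = c → x = x₁ ∨ x = x₂ := by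
  obtain ⟨x₁, hx₁, hfx₁⟩ :=
    intermediate_value_Ioo hpq (hf.mono (Icc_subset_Icc_right hqr)) hcp
  obtain ⟨x₂, hx₂, hfx₂⟩ :=
    intermediate_value_Ioo' hqr (hf.mono (Icc_subset_Icc_left hpq)) hcr
  refine ⟨x₁, hx₁, x₂, hx₂, hfx₁, hfx₂, fun x hx hfx => ?_⟩
  rcases le_total x q with hxq | hqx
  · exact .inl <| hmono.injOn ⟨hx.1.le, hxq⟩ (Ioo_subset_Icc_self hx₁) (hfx.trans hfx₁.symm)
  · exact .inr <| hanti.injOn ⟨hqx, hx.2.le⟩ (Ioo_subset_Icc_self hx₂) (hfx.trans hfx₂.symm)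

open MobiusElliptic in
theorem two_body_exactly_two_solutions (R m : ℝ) (hR : 0 < R) (hm : 0 < m)
    (hmass : m < 2 * R ^ 3) :
    ∃ α₁ ∈ Set.Ioo (0 : ℝ) ((Real.sqrt 2 - 1) * R),
      ∃ α₂ ∈ Set.Ioo ((Real.sqrt 2 - 1) * R) R,
        (R ^ 2 - α₁ ^ 2) * α₁ / (R ^ 2 + α₁ ^ 2) ^ 2 =
            m ^ ((1 : ℝ) / 3) / (4 * (2 : ℝ) ^ ((1 : ℝ) / 3) * R ^ 2) ∧
          (R ^ 2 - α₂ ^ 2) * α₂ / (R ^ 2 + α₂ ^ 2) ^ 2 =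
            m ^ ((1 : ℝ) / 3) / (4 * (2 : ℝ) ^ ((1 : ℝ) / 3) * R ^ 2) ∧
          ∀ α ∈ Set.Ioo (0 : ℝ) R,
            (R ^ 2 - α ^ 2) * α / (R ^ 2 + α ^ 2) ^ 2 =
                m ^ ((1 : ℝ) / 3) / (4 * (2 : ℝ) ^ ((1 : ℝ) / 3) * R ^ 2) →
              α = α₁ ∨ α = α₂ := by
  have ha0 := sqrt_two_sub_one_mul_pos hR
  have haR : (√2 - 1) * R < R := by nlinarith [Real.sqrt_two_lt_three_halves]
  have hc0 : 0 < m ^ ((1 : ℝ) / 3) / (4 * (2 : ℝ) ^ ((1 : ℝ) / 3) * R ^ 2) := by positivity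
  have hcmax := rhs_lt_profile_max hR hm hmass
  exact exists_two_eq_of_strictMonoOn_of_strictAntiOn (f := profile R) ha0.le haR.le
    (continuous_profile hR.ne').continuousOn (strictMonoOn_profile hR) (strictAntiOn_profile hR)
    (by rw [profile_zero, profile_max hR]; exact ⟨hc0, hcmax⟩)
    (by rw [profile_self, profile_max hR]; exact ⟨hc0, hcmax⟩)
end

section
/- Let R > 0 and m > 0. If m = 2R³ then the equation (R²−α²)α/(R²+α²)² = ∛m/(4·∛2·R²) has exactly one solution α = (√2−1)R in (0,R); if m > 2R³ the equation has no solution in (0,R). -/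
/-!
The left-hand side is bounded by `1 / (4R)` because
`(R² + α²)² - 4Rα(R² - α²) = (α² + 2Rα - R²)²`, with equality exactly at the positive root
`α = (√2 - 1)R` of `α² + 2Rα = R²`. The right-hand side equals `(m / (2R³))^(1/3) / (4R)`, which is
this maximum when `m = 2R³` and exceeds it when `m > 2R³`.
-/

namespace TwoBody

open Real

lemma sq_add_sq_sq_sub_four_mul_eq (R α : ℝ) :
    (R ^ 2 + α ^ 2) ^ 2 - 4 * R * ((R ^ 2 - α ^ 2) * α) = (α ^ 2 + 2 * R * α - R ^ 2) ^ 2 := by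
  ring

lemma div_le_one_div_four_mul {R : ℝ} (hR : 0 < R) (α : ℝ) :
    (R ^ 2 - α ^ 2) * α / (R ^ 2 + α ^ 2) ^ 2 ≤ 1 / (4 * R) := by
  rw [div_le_div_iff₀ (by positivity) (by positivity)]
  nlinarith [sq_add_sq_sq_sub_four_mul_eq R α, sq_nonneg (α ^ 2 + 2 * R * α - R ^ 2)]

lemma div_eq_one_div_four_mul_iff {R α : ℝ} (hR : 0 < R) (hα : 0 ≤ α) :
    (R ^ 2 - α ^ 2) * α / (R ^ 2 + α ^ 2) ^ 2 = 1 / (4 * R) ↔ α = (√2 - 1) * R := by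
  have hsqrt : √2 ^ 2 = 2 := sq_sqrt zero_le_two
  rw [div_eq_div_iff (by positivity) (by positivity)]
  constructor
  · intro h
    have hroot : α ^ 2 + 2 * R * α - R ^ 2 = 0 := by
      nlinarith [sq_add_sq_sq_sub_four_mul_eq R α, sq_nonneg (α ^ 2 + 2 * R * α - R ^ 2)]
    have hsq : (α + R) ^ 2 = (√2 * R) ^ 2 := by linear_combination hroot - R ^ 2 * hsqrt
    have : α + R = √2 * R := (sq_eq_sq₀ (by positivity) (by positivity)).mp hsq
    linarith
  · rintro rfl
    linear_combination (2 - √2 ^ 2) * R ^ 4 * hsqrt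

lemma rpow_third_div_eq {R m : ℝ} (hR : 0 < R) (hm : 0 ≤ m) :
    m ^ ((1 : ℝ) / 3) / (4 * (2 : ℝ) ^ ((1 : ℝ) / 3) * R ^ 2) =
      (m / (2 * R ^ 3)) ^ ((1 : ℝ) / 3) / (4 * R) := by
  have hcube : (R ^ 3) ^ ((1 : ℝ) / 3) = R := by
    rw [← rpow_natCast, ← rpow_mul hR.le]
    norm_num
  rw [div_rpow hm (by positivity), mul_rpow zero_le_two (by positivity), hcube]
  field_simp

end TwoBody

open TwoBody in
theorem two_body_critical_and_supercritical_general (R m : ℝ) :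
    (m = 2 * R ^ 3 →
      ∀ α ∈ Set.Ioo (0 : ℝ) R,
        ((R ^ 2 - α ^ 2) * α / (R ^ 2 + α ^ 2) ^ 2 =
            m ^ ((1 : ℝ) / 3) / (4 * (2 : ℝ) ^ ((1 : ℝ) / 3) * R ^ 2) ↔
          α = (Real.sqrt 2 - 1) * R)) ∧
    (m > 2 * R ^ 3 →
      ∀ α ∈ Set.Ioo (0 : ℝ) R,
        (R ^ 2 - α ^ 2) * α / (R ^ 2 + α ^ 2) ^ 2 ≠
          m ^ ((1 : ℝ) / 3) / (4 * (2 : ℝ) ^ ((1 : ℝ) / 3) * R ^ 2)) := by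
  refine ⟨fun hm α hα => ?_, fun hm α hα => ?_⟩
  · have hR : 0 < R := hα.1.trans hα.2
    rw [rpow_third_div_eq hR (by rw [hm]; positivity), hm, div_self (by positivity), Real.one_rpow]
    exact div_eq_one_div_four_mul_iff hR hα.1.le
  · have hR : 0 < R := hα.1.trans hα.2
    have hR3 : 0 < 2 * R ^ 3 := by positivity
    have hroot : 1 < (m / (2 * R ^ 3)) ^ ((1 : ℝ) / 3) :=
      Real.one_lt_rpow ((one_lt_div hR3).mpr hm) (by norm_num)
    rw [rpow_third_div_eq hR (hR3.trans hm).le]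
    refine ((div_le_one_div_four_mul hR α).trans_lt ?_).ne
    gcongr

theorem two_body_critical_and_supercritical (R m : ℝ) (hR : 0 < R) (hm : 0 < m) :
    (m = 2 * R ^ 3 →
      ∀ α ∈ Set.Ioo (0 : ℝ) R,
        ((R ^ 2 - α ^ 2) * α / (R ^ 2 + α ^ 2) ^ 2 =
            m ^ ((1 : ℝ) / 3) / (4 * (2 : ℝ) ^ ((1 : ℝ) / 3) * R ^ 2) ↔
          α = (Real.sqrt 2 - 1) * R)) ∧
    (m > 2 * R ^ 3 →
      ∀ α ∈ Set.Ioo (0 : ℝ) R,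
        (R ^ 2 - α ^ 2) * α / (R ^ 2 + α ^ 2) ^ 2 ≠
          m ^ ((1 : ℝ) / 3) / (4 * (2 : ℝ) ^ ((1 : ℝ) / 3) * R ^ 2)) :=
  two_body_critical_and_supercritical_general R m
end
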